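/- Let (X, ‖·‖) be a Banach space, B : X × X → X a bounded bilinear map with norm K₂, T : X × X × X → X a bounded trilinear map with norm K₃, and L : X → X a bounded linear map with operator norm N < 1. Then for every y ∈ X with ‖y‖ < min((1−N)/2, (1−N)²/(2(2K₂+3K₃))), the equation x = y + L(x) + B(x,x) + T(x,x,x) has a unique solution x in the closed ball of radius R̃ = min(1, (1−N)/(2K₂+3K₃)) centered at 0, and this solution satisfies ‖x‖ ≤ 2‖y‖/(1−N). -/

import Mathlib

private lemma aux_coef (K₂ K₃ N R a b : ℝ) (hK₂ : 0 ≤ K₂) (hK₃ : 0 ≤ K₃)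
    (hK23 : 0 < K₂ + 2 * K₃) (ha : 0 ≤ a) (hb : 0 ≤ b) (haR : a < R) (hbR : b ≤ R)
    (hR1 : R ≤ 1) (hCR : (2 * K₂ + 3 * K₃) * R ≤ 1 - N) :
    N + K₂ * (b + a) + K₃ * (b^2 + b * a + a^2) < 1 := by
  nlinarith [mul_nonneg hK₃ (mul_nonneg (sub_nonneg.2 hbR) hb),
    mul_nonneg hK₃ (mul_nonneg (sub_nonneg.2 hbR) ha),
    mul_nonneg hK₃ (mul_nonneg (sub_nonneg.2 haR.le) ha),
    mul_pos hK23 (sub_pos.2 haR),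
    mul_nonneg (mul_nonneg hK₃ hb) (sub_nonneg.2 hR1),
    mul_nonneg (mul_nonneg hK₃ ha) (sub_nonneg.2 hR1),
    mul_le_mul_of_nonneg_left hbR hK₂,
    mul_le_mul_of_nonneg_left hbR hK₃]

set_option maxHeartbeats 800000 in
/-- Abstract fixed-point lemma (quadratic–cubic variant of the Banach contraction
argument): if `L` is linear with norm `N < 1`, `B` bilinear with norm `K₂`, `T`
trilinear with norm `K₃`, then for small `y` the equation
`x = y + L x + B(x,x) + T(x,x,x)` has a unique solution in the ball of radius
`R̃ = min(1, (1−N)/(2K₂+3K₃))`, and it satisfies `‖x‖ ≤ 2‖y‖/(1−N)`. -/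
theorem abstract_fixed_point
    (X : Type*) [NormedAddCommGroup X] [NormedSpace ℝ X] [CompleteSpace X]
    (B : X →L[ℝ] X →L[ℝ] X) (T : X →L[ℝ] X →L[ℝ] X →L[ℝ] X) (L : X →L[ℝ] X)
    (K₂ K₃ N : ℝ) (hK₂ : 0 ≤ K₂) (hK₃ : 0 ≤ K₃) (hN0 : 0 ≤ N) (hN : N < 1)
    (hB : ∀ u v : X, ‖B u v‖ ≤ K₂ * ‖u‖ * ‖v‖)
    (hT : ∀ u v w : X, ‖T u v w‖ ≤ K₃ * ‖u‖ * ‖v‖ * ‖w‖)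
    (hL : ∀ u : X, ‖L u‖ ≤ N * ‖u‖)
    (y : X)
    (hy : ‖y‖ < min ((1 - N) / 2) ((1 - N)^2 / (2 * (2 * K₂ + 3 * K₃)))) :
    ∃ x : X,
      (x = y + L x + B x x + T x x x ∧
        ‖x‖ ≤ min 1 ((1 - N) / (2 * K₂ + 3 * K₃)) ∧
        ‖x‖ ≤ 2 * ‖y‖ / (1 - N)) ∧
      ∀ x' : X, x' = y + L x' + B x' x' + T x' x' x' →
        ‖x'‖ ≤ min 1 ((1 - N) / (2 * K₂ + 3 * K₃)) → x' = x := by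
  have h1N : (0:ℝ) < 1 - N := by linarith
  obtain ⟨C, hCdef⟩ : ∃ C : ℝ, C = 2 * K₂ + 3 * K₃ := ⟨_, rfl⟩
  rw [← hCdef] at hy ⊢
  rcases le_or_gt C 0 with hC | hC
  · -- degenerate case: C = 0, hypothesis is contradictory
    have hC0 : C = 0 := le_antisymm hC (by rw [hCdef]; positivity)
    have hz : (1 - N)^2 / (2 * C) = 0 := by rw [hC0]; simp
    have h2 := hy.trans_le (min_le_right _ _)
    rw [hz] at h2
    exact absurd h2 (not_lt.2 (norm_nonneg y))
  -- main case
  have hy1 : ‖y‖ < (1 - N) / 2 := hy.trans_le (min_le_left _ _)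
  have hy2 : ‖y‖ < (1 - N)^2 / (2 * C) := hy.trans_le (min_le_right _ _)
  obtain ⟨r, hrdef⟩ : ∃ r : ℝ, r = 2 * ‖y‖ / (1 - N) := ⟨_, rfl⟩
  obtain ⟨R, hRdef⟩ : ∃ R : ℝ, R = min 1 ((1 - N) / C) := ⟨_, rfl⟩
  rw [← hrdef, ← hRdef]
  have hr0 : 0 ≤ r := by rw [hrdef]; positivity
  have hR1 : R ≤ 1 := by rw [hRdef]; exact min_le_left _ _
  have hRC : C * R ≤ 1 - N := by
    have h := min_le_right (1:ℝ) ((1 - N) / C)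
    rw [← hRdef] at h
    calc C * R ≤ C * ((1 - N) / C) := mul_le_mul_of_nonneg_left h hC.le
      _ = 1 - N := by field_simp
  have hrR : r < R := by
    rw [hrdef, hRdef, lt_min_iff]
    constructor
    · rw [div_lt_one h1N]; linarith
    · rw [div_lt_div_iff₀ h1N hC]
      have h := (lt_div_iff₀ (by positivity : (0:ℝ) < 2 * C)).mp hy2
      nlinarith
  have hr1 : r < 1 := hrR.trans_le hR1
  have hyr : ‖y‖ = (1 - N) * r / 2 := by rw [hrdef]; field_simp
  obtain ⟨f, hfdef⟩ : ∃ f : X → X, f = fun u => y + L u + B u u + T u u u := ⟨_, rfl⟩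
  -- key difference estimate
  have key : ∀ u v : X, ‖f u - f v‖ ≤
      (N + K₂ * (‖u‖ + ‖v‖) + K₃ * (‖u‖^2 + ‖u‖ * ‖v‖ + ‖v‖^2)) * ‖u - v‖ := by
    intro u v
    have hid : f u - f v = L (u - v) + (B u (u - v) + B (u - v) v) +
        (T u u (u - v) + T u (u - v) v + T (u - v) v v) := by
      simp only [hfdef, map_sub, ContinuousLinearMap.sub_apply]
      abel
    rw [hid]
    have t1 : ‖L (u - v) + (B u (u - v) + B (u - v) v) +
        (T u u (u - v) + T u (u - v) v + T (u - v) v v)‖ ≤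
        ‖L (u - v)‖ + (‖B u (u - v)‖ + ‖B (u - v) v‖) +
        (‖T u u (u - v)‖ + ‖T u (u - v) v‖ + ‖T (u - v) v v‖) := by
      refine norm_add₃_le.trans ?_
      gcongr
      exacts [norm_add_le _ _, norm_add₃_le]
    have h1 := hL (u - v); have h2 := hB u (u - v); have h3 := hB (u - v) v
    have h4 := hT u u (u - v); have h5 := hT u (u - v) v; have h6 := hT (u - v) v v
    nlinarith [norm_nonneg (u - v)]
  -- norm bound on f
  have fbound : ∀ u : X, ‖u‖ ≤ r → ‖f u‖ ≤ r := by
    intro u hu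
    have t1 : ‖f u‖ ≤ ‖y‖ + ‖L u‖ + ‖B u u‖ + ‖T u u u‖ := by
      rw [hfdef]
      refine (norm_add_le _ _).trans ?_
      gcongr
      exact norm_add₃_le
    have h1 := hL u; have h2 := hB u u; have h3 := hT u u u
    have hu0 := norm_nonneg u
    have h2' : ‖u‖ * ‖u‖ ≤ r * r := mul_le_mul hu hu hu0 hr0
    have h3' : ‖u‖ * ‖u‖ * ‖u‖ ≤ r * r * r := by nlinarith
    have hR0 : (0:ℝ) ≤ R := le_trans hr0 hrR.le
    have s1 : K₂ * r + K₃ * (r * r) ≤ (K₂ + K₃) * r := by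
      nlinarith [mul_nonneg (mul_nonneg hK₃ hr0) (sub_nonneg.2 hr1.le)]
    have s2 : (K₂ + K₃) * r ≤ (K₂ + K₃) * R :=
      mul_le_mul_of_nonneg_left hrR.le (by positivity)
    have s3 : 2 * ((K₂ + K₃) * R) ≤ C * R := by
      rw [hCdef]; nlinarith [mul_nonneg hK₃ hR0]
    have s4 : K₂ * r + K₃ * (r * r) ≤ (1 - N) / 2 := by linarith
    have hKr : K₂ * (r * r) + K₃ * (r * r * r) ≤ (1 - N) * r / 2 := by
      nlinarith [mul_le_mul_of_nonneg_left s4 hr0]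
    nlinarith [mul_le_mul_of_nonneg_left hu hN0,
      mul_le_mul_of_nonneg_left h2' hK₂, mul_le_mul_of_nonneg_left h3' hK₃]
  -- contraction constant
  obtain ⟨k, hkdef⟩ : ∃ k : ℝ, k = N + 2 * K₂ * r + 3 * K₃ * (r * r) := ⟨_, rfl⟩
  have hk0 : 0 ≤ k := by rw [hkdef]; positivity
  have hk1 : k < 1 := by
    have hr2 : r * r ≤ r := by nlinarith
    have h1 : k ≤ N + C * r := by
      rw [hkdef, hCdef]
      nlinarith [mul_le_mul_of_nonneg_left hr2 hK₃]
    have h2 : C * r < C * R := mul_lt_mul_of_pos_left hrR hC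
    linarith
  obtain ⟨s, hsdef⟩ : ∃ s : Set X, s = Metric.closedBall (0:X) r := ⟨_, rfl⟩
  have hsc : IsComplete s := by rw [hsdef]; exact Metric.isClosed_closedBall.isComplete
  have hsf : Set.MapsTo f s s := by
    intro u hu
    rw [hsdef, Metric.mem_closedBall, dist_zero_right] at hu ⊢
    exact fbound u hu
  have hlip : LipschitzOnWith ⟨k, hk0⟩ f s := by
    apply LipschitzOnWith.of_dist_le_mul
    intro u hu v hv
    rw [hsdef, Metric.mem_closedBall, dist_zero_right] at hu hv
    rw [dist_eq_norm, dist_eq_norm]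
    refine (key u v).trans ?_
    have hu0 := norm_nonneg u
    have hv0 := norm_nonneg v
    have hcle : (N + K₂ * (‖u‖ + ‖v‖) + K₃ * (‖u‖^2 + ‖u‖ * ‖v‖ + ‖v‖^2)) ≤ k := by
      rw [hkdef]
      nlinarith [mul_le_mul hu hv hv0 hr0, mul_le_mul hu hu hu0 hr0,
        mul_le_mul hv hv hv0 hr0, mul_le_mul_of_nonneg_left hu hK₂,
        mul_le_mul_of_nonneg_left hv hK₂,
        mul_le_mul_of_nonneg_left (mul_le_mul hu hu hu0 hr0) hK₃,
        mul_le_mul_of_nonneg_left (mul_le_mul hu hv hv0 hr0) hK₃,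
        mul_le_mul_of_nonneg_left (mul_le_mul hv hv hv0 hr0) hK₃]
    exact mul_le_mul_of_nonneg_right hcle (norm_nonneg _)
  have hcontr : ContractingWith ⟨k, hk0⟩ (hsf.restrict f s s) :=
    ⟨by exact_mod_cast hk1, hlip.mapsToRestrict hsf⟩
  have h0s : (0:X) ∈ s := by
    rw [hsdef, Metric.mem_closedBall, dist_self]; exact hr0
  obtain ⟨x, hxs, hfx, -, -⟩ :=
    hcontr.exists_fixedPoint' hsc hsf h0s (edist_ne_top _ _)
  rw [hsdef, Metric.mem_closedBall, dist_zero_right] at hxs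
  have hxeq : x = y + L x + B x x + T x x x := by
    have := hfx
    rw [Function.IsFixedPt, hfdef] at this
    exact this.symm
  refine ⟨x, ⟨hxeq, ?_, hxs⟩, ?_⟩
  · exact hxs.trans hrR.le
  · -- uniqueness
    intro x' hx' hx'R
    have hK23 : 0 < K₂ + 2 * K₃ := by
      rcases lt_or_ge 0 K₂ with h | h
      · linarith
      · have hz : K₂ = 0 := le_antisymm h hK₂
        rw [hCdef, hz] at hC; linarith
    have hdiff : ‖x' - x‖ ≤
        (N + K₂ * (‖x'‖ + ‖x‖) + K₃ * (‖x'‖^2 + ‖x'‖ * ‖x‖ + ‖x‖^2)) * ‖x' - x‖ := by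
      have h := key x' x
      rw [hfdef] at h
      simp only at h
      rw [← hx', ← hxeq] at h
      exact h
    have ha := norm_nonneg x
    have hb := norm_nonneg x'
    have haR : ‖x‖ < R := lt_of_le_of_lt hxs hrR
    have hbR : ‖x'‖ ≤ R := hx'R
    have hcoef : N + K₂ * (‖x'‖ + ‖x‖) + K₃ * (‖x'‖^2 + ‖x'‖ * ‖x‖ + ‖x‖^2) < 1 := by
      have hCR : (2 * K₂ + 3 * K₃) * R ≤ 1 - N := by rw [← hCdef]; linarith [hRC]
      exact aux_coef K₂ K₃ N R ‖x‖ ‖x'‖ hK₂ hK₃ hK23 ha hb haR hbR hR1 hCR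
    have hd0 : ‖x' - x‖ ≤ 0 := by
      by_contra hcon
      push_neg at hcon
      linarith [mul_lt_mul_of_pos_right hcoef hcon]
    have hz : x' - x = 0 := by rwa [← norm_le_zero_iff]
    exact sub_eq_zero.mp hz
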